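/- arXiv:math/0610578 — 3 statements merged into one kernel-verified Lean document; each statement's English description precedes it below -/
import Mathlib

section
/- Let g(z) = exp(2z)/(exp(exp(z)) - 1) be the Fisher information weight of the complementary log-log model. Then the function ψ(z_1, z_2) = g(z_1) g(z_2) (z_1 - z_2)^2 is bounded on ℝ² and attains its supremum at some point (z_1*, z_2*) ∈ ℝ². -/
private lemma denom_pos' (z : ℝ) : 0 < Real.exp (Real.exp z) - 1 := by
  nlinarith [Real.add_one_le_exp (Real.exp z), Real.exp_pos z]

private lemma exp_ge_pow4 (t : ℝ) (ht : 0 ≤ t) : t^4 / 256 ≤ Real.exp t := by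
  have h1 : t/4 ≤ Real.exp (t/4) := by nlinarith [Real.add_one_le_exp (t/4)]
  have h2 : Real.exp t = (Real.exp (t/4))^4 := by
    rw [← Real.exp_nat_mul]; congr 1; push_cast; ring
  have h3 : (t/4)^4 ≤ (Real.exp (t/4))^4 := by
    apply pow_le_pow_left₀ (by positivity) h1
  rw [h2]; nlinarith

private lemma G_le' (z : ℝ) :
    Real.exp (2*z) / (Real.exp (Real.exp z) - 1) ≤ 512 * Real.exp (-|z|) := by
  have hd := denom_pos' z
  rw [div_le_iff₀ hd]
  rcases le_or_gt z 0 with h | h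
  · rw [abs_of_nonpos h, neg_neg]
    have h1 : Real.exp z ≤ Real.exp (Real.exp z) - 1 := by
      nlinarith [Real.add_one_le_exp (Real.exp z)]
    have h2 : Real.exp (2*z) = Real.exp z * Real.exp z := by
      rw [← Real.exp_add]; ring_nf
    nlinarith [Real.exp_pos z]
  · rw [abs_of_pos h]
    have h1 : 1 ≤ Real.exp z := Real.one_le_exp h.le
    have h2 : (2:ℝ) ≤ Real.exp 1 := by nlinarith [Real.add_one_le_exp (1:ℝ)]
    have h3 : Real.exp 1 ≤ Real.exp (Real.exp z) := Real.exp_le_exp.mpr h1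
    have h4 : Real.exp (4*z) / 256 ≤ Real.exp (Real.exp z) := by
      have hb := exp_ge_pow4 (Real.exp z) (Real.exp_pos z).le
      have he : (Real.exp z)^4 = Real.exp (4*z) := by
        rw [← Real.exp_nat_mul]; norm_num
      linarith [he ▸ hb]
    have h5 : Real.exp (Real.exp z) / 2 ≤ Real.exp (Real.exp z) - 1 := by linarith
    have h6 : Real.exp (-z) * Real.exp (4*z) = Real.exp (3*z) := by
      rw [← Real.exp_add]; ring_nf
    have h7 : Real.exp (2*z) ≤ Real.exp (3*z) := Real.exp_le_exp.mpr (by linarith)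
    nlinarith [Real.exp_pos (-z), Real.exp_pos (4*z)]

private lemma exp_ge_cube' (t : ℝ) (ht : 0 ≤ t) : t^3 / 27 ≤ Real.exp t := by
  have h1 : t/3 ≤ Real.exp (t/3) := by nlinarith [Real.add_one_le_exp (t/3)]
  have h2 : Real.exp t = (Real.exp (t/3))^3 := by
    rw [← Real.exp_nat_mul]; congr 1; push_cast; ring
  have h3 : (t/3)^3 ≤ (Real.exp (t/3))^3 := by
    apply pow_le_pow_left₀ (by positivity) h1
  rw [h2]; nlinarith

private lemma sq_exp_neg_le' (t : ℝ) (ht : 0 ≤ t) : t^2 * Real.exp (-t) ≤ 4 := by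
  have h1 : t/2 ≤ Real.exp (t/2) := by nlinarith [Real.add_one_le_exp (t/2)]
  have h2 : Real.exp t = (Real.exp (t/2))^2 := by
    rw [← Real.exp_nat_mul]; congr 1; push_cast; ring
  have h3 : t^2/4 ≤ Real.exp t := by rw [h2]; nlinarith
  rw [Real.exp_neg, mul_comm, ← div_eq_inv_mul, div_le_iff₀ (Real.exp_pos t)]
  nlinarith [Real.exp_pos t]

private lemma sq_exp_neg_le_div' (t : ℝ) (ht : 0 < t) : t^2 * Real.exp (-t) ≤ 27 / t := by
  have h3 := exp_ge_cube' t ht.le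
  rw [Real.exp_neg, mul_comm, ← div_eq_inv_mul, div_le_div_iff₀ (Real.exp_pos t) ht]
  nlinarith

/-- For the cloglog Fisher information weight
`g z = exp (2*z) / (exp (exp z) - 1)`, the two-point design criterion
`ψ (z₁, z₂) = g z₁ * g z₂ * (z₁ - z₂)^2` is bounded on `ℝ²` and attains its
supremum at some point. -/
theorem cloglog_two_point_criterion_attains_max
    (g : ℝ → ℝ)
    (hg : ∀ z, g z = Real.exp (2 * z) / (Real.exp (Real.exp z) - 1))
    (ψ : ℝ × ℝ → ℝ)
    (hψ : ∀ p : ℝ × ℝ, ψ p = g p.1 * g p.2 * (p.1 - p.2) ^ 2) :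
    (∃ M : ℝ, ∀ p : ℝ × ℝ, |ψ p| ≤ M) ∧
    ∃ p : ℝ × ℝ, ∀ q : ℝ × ℝ, ψ q ≤ ψ p := by
  have hGpos : ∀ z, 0 < g z := fun z => by
    rw [hg]; exact div_pos (Real.exp_pos _) (denom_pos' z)
  have hGle : ∀ z, g z ≤ 512 * Real.exp (-|z|) := fun z => by
    rw [hg]; exact G_le' z
  have hψnn : ∀ p : ℝ × ℝ, 0 ≤ ψ p := fun p => by
    rw [hψ]
    exact mul_nonneg (mul_nonneg (hGpos _).le (hGpos _).le) (sq_nonneg _)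
  -- key pointwise bound
  have key : ∀ p : ℝ × ℝ, ψ p ≤
      512^2 * ((|p.1| + |p.2|)^2 * Real.exp (-(|p.1| + |p.2|))) := by
    intro p
    rw [hψ]
    have hgg : g p.1 * g p.2 ≤ (512 * Real.exp (-|p.1|)) * (512 * Real.exp (-|p.2|)) :=
      mul_le_mul (hGle _) (hGle _) (hGpos _).le (by positivity)
    have hmul : Real.exp (-|p.1|) * Real.exp (-|p.2|) = Real.exp (-(|p.1| + |p.2|)) := by
      rw [← Real.exp_add]; ring_nf
    have hgg2 : g p.1 * g p.2 ≤ 512^2 * Real.exp (-(|p.1| + |p.2|)) := by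
      calc g p.1 * g p.2 ≤ (512 * Real.exp (-|p.1|)) * (512 * Real.exp (-|p.2|)) := hgg
        _ = 512^2 * (Real.exp (-|p.1|) * Real.exp (-|p.2|)) := by ring
        _ = 512^2 * Real.exp (-(|p.1| + |p.2|)) := by rw [hmul]
    have hsq : (p.1 - p.2)^2 ≤ (|p.1| + |p.2|)^2 := by
      rw [← sq_abs]
      exact pow_le_pow_left₀ (abs_nonneg _) (abs_sub p.1 p.2) 2
    calc g p.1 * g p.2 * (p.1 - p.2)^2
        ≤ (512^2 * Real.exp (-(|p.1| + |p.2|))) * (|p.1| + |p.2|)^2 :=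
          mul_le_mul hgg2 hsq (sq_nonneg _)
            (by positivity)
      _ = 512^2 * ((|p.1| + |p.2|)^2 * Real.exp (-(|p.1| + |p.2|))) := by ring
  constructor
  · refine ⟨512^2 * 4, fun p => ?_⟩
    rw [abs_of_nonneg (hψnn p)]
    calc ψ p ≤ 512^2 * ((|p.1| + |p.2|)^2 * Real.exp (-(|p.1| + |p.2|))) := key p
      _ ≤ 512^2 * 4 := by
          have := sq_exp_neg_le' (|p.1| + |p.2|) (by positivity)
          nlinarith
  · -- continuity
    have hgc : Continuous g := by
      have hge : g = fun z => Real.exp (2*z) / (Real.exp (Real.exp z) - 1) := funext hg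
      rw [hge]
      exact (Real.continuous_exp.comp (continuous_const.mul continuous_id)).div
        ((Real.continuous_exp.comp Real.continuous_exp).sub continuous_const)
        (fun z => (denom_pos' z).ne')
    have hψc : Continuous ψ := by
      have hpe : ψ = fun p : ℝ × ℝ => g p.1 * g p.2 * (p.1 - p.2)^2 := funext hψ
      rw [hpe]
      exact ((hgc.comp continuous_fst).mul (hgc.comp continuous_snd)).mul
        ((continuous_fst.sub continuous_snd).pow 2)
    have hε : 0 < ψ (0, 1) := by
      rw [hψ]
      have : ((0:ℝ), (1:ℝ)).1 - ((0:ℝ), (1:ℝ)).2 = -1 := by norm_num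
      rw [this]
      norm_num
      exact mul_pos (hGpos 0) (hGpos 1)
    set ε := ψ (0, 1) with hεdef
    set R : ℝ := max 1 (27 * 512^2 / ε) with hRdef
    have hR1 : (1:ℝ) ≤ R := le_max_left _ _
    have hR2 : 27 * 512^2 / ε ≤ R := le_max_right _ _
    have hR0 : (0:ℝ) < R := lt_of_lt_of_le one_pos hR1
    have hK : IsCompact (Set.Icc ((-R, -R) : ℝ × ℝ) ((R, R) : ℝ × ℝ)) := isCompact_Icc
    have hne : ((0:ℝ), (1:ℝ)) ∈ Set.Icc ((-R, -R) : ℝ × ℝ) ((R, R) : ℝ × ℝ) := by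
      simp only [Set.mem_Icc, Prod.le_def]
      refine ⟨⟨by linarith, by linarith⟩, ⟨by linarith, by linarith⟩⟩
    obtain ⟨p, hpK, hmax⟩ := hK.exists_isMaxOn ⟨_, hne⟩ hψc.continuousOn
    refine ⟨p, fun q => ?_⟩
    by_cases hq : q ∈ Set.Icc ((-R, -R) : ℝ × ℝ) ((R, R) : ℝ × ℝ)
    · exact hmax hq
    · have hs : R < |q.1| + |q.2| := by
        simp only [Set.mem_Icc, Prod.le_def, not_and_or, not_le] at hq
        have h1 := le_abs_self q.1
        have h2 := le_abs_self q.2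
        have h3 := neg_abs_le q.1
        have h4 := neg_abs_le q.2
        have h5 := abs_nonneg q.1
        have h6 := abs_nonneg q.2
        rcases hq with (h | h) | (h | h) <;> linarith
      set s := |q.1| + |q.2| with hsdef
      have hspos : 0 < s := lt_trans hR0 hs
      have h1 : ψ q ≤ 512^2 * (27 / s) :=
        le_trans (key q) (by
          have := sq_exp_neg_le_div' s hspos
          nlinarith)
      have h2 : 512^2 * (27 / s) ≤ 512^2 * (27 / R) := by
        gcongr
      have h3 : 512^2 * (27 / R) ≤ ε := by
        rw [div_le_iff₀ hε] at hR2
        rw [mul_div_assoc'] at *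
        rw [div_le_iff₀ hR0]
        nlinarith
      calc ψ q ≤ 512^2 * (27 / s) := h1
        _ ≤ 512^2 * (27 / R) := h2
        _ ≤ ε := h3
        _ ≤ ψ p := hmax hne
end

section
/- Let g(z) = exp(-z)/(1 + exp(-z))^2 be the Fisher information weight of the logit model. Then for all real z_1 ≤ z_2, writing m = (z_2 - z_1)/2, one has g(z_1) g(z_2) (z_2 - z_1)^2 ≤ g(m) g(-m) (2m)^2 = 4 m^2 g(m)^2. That is, among two-point designs with a fixed distance between the canonical points, the pair symmetric about zero maximizes the determinant of the Fisher information. -/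
/-- For the logit Fisher information weight `g z = exp (-z) / (1 + exp (-z))^2`,
among two-point designs with a fixed distance between the canonical points the
pair symmetric about zero maximizes the determinant of the Fisher information:
for `z₁ ≤ z₂` with `m = (z₂ - z₁)/2`,
`g z₁ * g z₂ * (z₂ - z₁)^2 ≤ g m * g (-m) * (2*m)^2 = 4 * m^2 * (g m)^2`. -/
theorem logit_symmetric_pair_maximizes
    (g : ℝ → ℝ)
    (hg : ∀ z, g z = Real.exp (-z) / (1 + Real.exp (-z)) ^ 2)
    (z₁ z₂ : ℝ) (h : z₁ ≤ z₂) :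
    g z₁ * g z₂ * (z₂ - z₁) ^ 2 ≤
        g ((z₂ - z₁) / 2) * g (-((z₂ - z₁) / 2)) * (2 * ((z₂ - z₁) / 2)) ^ 2 ∧
    g ((z₂ - z₁) / 2) * g (-((z₂ - z₁) / 2)) * (2 * ((z₂ - z₁) / 2)) ^ 2 =
        4 * ((z₂ - z₁) / 2) ^ 2 * g ((z₂ - z₁) / 2) ^ 2 := by
  have geven : ∀ z, g (-z) = g z := by
    intro z
    rw [hg, hg, neg_neg, Real.exp_neg]
    have hz : Real.exp z > 0 := Real.exp_pos z
    field_simp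
    ring
  set m : ℝ := (z₂ - z₁) / 2 with hm
  have key : g z₁ * g z₂ ≤ g m * g (-m) := by
    rw [geven]
    rw [hg, hg, hg]
    set u := Real.exp (-z₁) with hu
    set w := Real.exp (-m) with hw
    have hupos : 0 < u := Real.exp_pos _
    have hwpos : 0 < w := Real.exp_pos _
    have hv : Real.exp (-z₂) = u * w ^ 2 := by
      rw [hu, hw, sq, ← Real.exp_add, ← Real.exp_add]
      congr 1
      rw [hm]; ring
    rw [hv]
    rw [div_mul_div_comm, div_mul_div_comm,
      div_le_div_iff₀ (by positivity) (by positivity)]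
    have key2 : u * (1 + w) ^ 2 ≤ (1 + u) * (1 + u * w ^ 2) := by
      nlinarith [sq_nonneg (1 - u * w)]
    nlinarith [mul_le_mul key2 key2 (by positivity) (by positivity),
      sq_nonneg u, sq_nonneg w, mul_pos hupos hwpos]
  constructor
  · have hsq : (0:ℝ) ≤ (z₂ - z₁) ^ 2 := sq_nonneg _
    have : (2 * m) ^ 2 = (z₂ - z₁) ^ 2 := by rw [hm]; ring
    rw [this]
    exact mul_le_mul_of_nonneg_right key hsq
  · rw [geven]; ring
end

section
/- Let g(z) = exp(-z)/(1 + exp(-z))^2 be the Fisher information weight of the logit model, and consider φ(t) = 4 t^2 g(t)^2 for t > 0, the determinant of the Fisher information of the symmetric two-point design at canonical points -t and t. Then: (i) the equation t · tanh(t/2) = 1 has a unique positive solution t*, and t* lies in the interval (1.543, 1.544); (ii) every maximizer t > 0 of φ satisfies t · tanh(t/2) = 1, so the D-optimal canonical points of the logit model are z_1* = -t* and z_2* = t* with t* ≈ 1.543. -/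
/-!
The weight is `g z = 1 / (4 cosh² (z/2))`, so on `t > 0` the criterion is `ψ(t)² / 4` with
`ψ t = t / cosh² (t/2)` positive, and a maximizer of the criterion is a critical point of `ψ`.
Since `ψ' t = (1 - t tanh (t/2)) / cosh² (t/2)`, this gives `t tanh (t/2) = 1`.
The map `t ↦ t tanh (t/2)` is continuous and strictly increasing on `[0, ∞)`, and it is `< 1`
at `1.543` and `> 1` at `1.544` (Taylor bounds on `exp`), whence existence, uniqueness and the
enclosure of the root.
-/

open Real Set

namespace Real

theorem tanh_strictMono : StrictMono tanh := by
  intro a b hab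
  by_contra! hba
  have := artanh_le_artanh (neg_one_lt_tanh b) (tanh_lt_one a) hba
  rw [artanh_tanh, artanh_tanh] at this
  exact this.not_gt hab

theorem tanh_nonneg {x : ℝ} (hx : 0 ≤ x) : 0 ≤ tanh x :=
  tanh_zero ▸ tanh_strictMono.monotone hx

theorem continuous_tanh : Continuous tanh := by
  simp only [funext tanh_eq_sinh_div_cosh]
  exact continuous_sinh.div continuous_cosh fun x => (cosh_pos x).ne'

theorem tanh_half_eq (x : ℝ) : tanh (x / 2) = (exp x - 1) / (exp x + 1) := by
  have hsq : exp x = exp (x / 2) ^ 2 := by rw [← exp_nat_mul]; ring_nf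
  have hinv : exp (-(x / 2)) = (exp (x / 2))⁻¹ := exp_neg _
  rw [tanh_eq, hinv, hsq]
  field_simp

theorem logit_weight_eq (z : ℝ) :
    exp (-z) / (1 + exp (-z)) ^ 2 = 1 / (4 * cosh (z / 2) ^ 2) := by
  have hsq : exp (-z) = exp (-(z / 2)) ^ 2 := by rw [← exp_nat_mul]; ring_nf
  have hinv : exp (z / 2) = (exp (-(z / 2)))⁻¹ := by rw [exp_neg, inv_inv]
  rw [cosh_eq, hinv, hsq]
  field_simp
  ring

end Real

theorem strictMonoOn_mul_tanh_half : StrictMonoOn (fun t => t * tanh (t / 2)) (Ici 0) :=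
  fun a ha _ _ hab =>
    mul_lt_mul'' hab (tanh_strictMono (by linarith)) ha (tanh_nonneg (by linarith [mem_Ici.1 ha]))

theorem continuous_mul_tanh_half : Continuous fun t => t * tanh (t / 2) :=
  continuous_id.mul (continuous_tanh.comp (continuous_id.div_const 2))

theorem exp_1_543_lt : exp 1.543 < 4.6832 := by
  have h0543 : exp 0.543 < 1.72117 := by
    refine (exp_bound' (x := 0.543) (by norm_num) (by norm_num) (n := 6) (by norm_num)).trans_lt ?_
    simp only [Finset.sum_range_succ, Finset.sum_range_zero]
    norm_num [Nat.factorial]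
  calc exp 1.543 = exp 1 * exp 0.543 := by rw [← exp_add]; norm_num
    _ < 2.7182818286 * 1.72117 := mul_lt_mul'' exp_one_lt_d9 h0543 (exp_pos _).le (exp_pos _).le
    _ < 4.6832 := by norm_num

theorem lt_exp_1_544 : 4.677 < exp 1.544 := by
  have h0544 : 1.7211 < exp 0.544 := by
    refine lt_of_lt_of_le ?_ (sum_le_exp_of_nonneg (x := 0.544) (by norm_num) 8)
    simp only [Finset.sum_range_succ, Finset.sum_range_zero]
    norm_num [Nat.factorial]
  calc (4.677 : ℝ) < 2.7182818283 * 1.7211 := by norm_num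
    _ < exp 1 * exp 0.544 := mul_lt_mul'' exp_one_gt_d9 h0544 (by norm_num) (by norm_num)
    _ = exp 1.544 := by rw [← exp_add]; norm_num

theorem mul_tanh_half_1_543_lt_one : 1.543 * tanh (1.543 / 2) < 1 := by
  rw [tanh_half_eq, mul_div_assoc', div_lt_one (by positivity)]
  linarith [exp_1_543_lt]

theorem one_lt_mul_tanh_half_1_544 : 1 < 1.544 * tanh (1.544 / 2) := by
  rw [tanh_half_eq, mul_div_assoc', lt_div_iff₀ (by positivity)]
  linarith [lt_exp_1_544]

theorem hasDerivAt_div_cosh_half_sq (t : ℝ) :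
    HasDerivAt (fun s => s / cosh (s / 2) ^ 2) ((1 - t * tanh (t / 2)) / cosh (t / 2) ^ 2) t := by
  have hcosh : HasDerivAt (fun s => cosh (s / 2)) (sinh (t / 2) * (1 / 2)) t :=
    ((hasDerivAt_id t).div_const 2).cosh
  have hc := (cosh_pos (t / 2)).ne'
  refine ((hasDerivAt_id t).div (hcosh.pow 2) (pow_ne_zero 2 hc)).congr_deriv ?_
  simp only [id, Pi.pow_apply, Nat.cast_ofNat, tanh_eq_sinh_div_cosh]
  field_simp
  ring

theorem mul_tanh_half_eq_one_of_isMaxOn {t : ℝ} (ht : 0 < t)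
    (hmax : IsMaxOn (fun s => s / cosh (s / 2) ^ 2) (Ioi 0) t) : t * tanh (t / 2) = 1 := by
  have hcrit := (hmax.isLocalMax (Ioi_mem_nhds ht)).hasDerivAt_eq_zero
    (hasDerivAt_div_cosh_half_sq t)
  rw [div_eq_zero_iff, or_iff_left (pow_pos (cosh_pos _) 2).ne'] at hcrit
  linarith

/-- For the logit Fisher information weight `g z = exp (-z) / (1 + exp (-z))^2`
and the symmetric two-point design criterion `φ t = 4 * t^2 * (g t)^2`:
(i) the equation `t * tanh (t/2) = 1` has a unique positive solution `t*`,
and `t* ∈ (1.543, 1.544)`; (ii) every positive maximizer of `φ` satisfies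
`t * tanh (t/2) = 1`, so the D-optimal canonical points of the logit model are
`±t*` with `t* ≈ 1.543`. -/
theorem logit_optimal_design_point
    (g : ℝ → ℝ)
    (hg : ∀ z, g z = Real.exp (-z) / (1 + Real.exp (-z)) ^ 2) :
    (∃! t : ℝ, 0 < t ∧ t * Real.tanh (t / 2) = 1) ∧
    (∀ t : ℝ, 0 < t → t * Real.tanh (t / 2) = 1 → 1.543 < t ∧ t < 1.544) ∧
    (∀ t : ℝ, 0 < t →
      (∀ s : ℝ, 0 < s → 4 * s ^ 2 * g s ^ 2 ≤ 4 * t ^ 2 * g t ^ 2) →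
      t * Real.tanh (t / 2) = 1) := by
  set f : ℝ → ℝ := fun t => t * tanh (t / 2)
  have hlo : f 1.543 < 1 := mul_tanh_half_1_543_lt_one
  have hhi : 1 < f 1.544 := one_lt_mul_tanh_half_1_544
  have hbounds : ∀ t : ℝ, 0 < t → f t = 1 → 1.543 < t ∧ t < 1.544 := fun t ht hft =>
    ⟨(strictMonoOn_mul_tanh_half.lt_iff_lt (by norm_num) ht.le).1 (hlo.trans_eq hft.symm),
      (strictMonoOn_mul_tanh_half.lt_iff_lt ht.le (by norm_num)).1 (hft.trans_lt hhi)⟩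
  refine ⟨?_, hbounds, fun t ht hmax => mul_tanh_half_eq_one_of_isMaxOn ht fun s hs => ?_⟩
  · obtain ⟨c, hc, hfc⟩ := intermediate_value_Icc (by norm_num : (1.543 : ℝ) ≤ 1.544)
      continuous_mul_tanh_half.continuousOn ⟨hlo.le, hhi.le⟩
    have hc0 : 0 < c := by linarith [hc.1]
    exact ⟨c, ⟨hc0, hfc⟩, fun y ⟨hy, hfy⟩ =>
      strictMonoOn_mul_tanh_half.injOn hy.le hc0.le (hfy.trans hfc.symm)⟩
  · have hcriterion (u : ℝ) : 4 * u ^ 2 * g u ^ 2 = (u / cosh (u / 2) ^ 2) ^ 2 / 4 := by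
      rw [hg, logit_weight_eq]
      field_simp
    have hle := hmax s hs
    rw [hcriterion, hcriterion] at hle
    exact (sq_le_sq₀ (div_pos hs (by positivity)).le (div_pos ht (by positivity)).le).1 (by linarith)
end
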